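/- For every integer c ≥ 0, only finitely many positive integers n with γ(n,n) = c are such that the n × n grid admits a perfect game of PackIt!; that is, the set {n ∈ ℕ⁺ : γ(n,n) = c and the n × n grid admits a perfect game of PackIt!} is finite. -/

import Mathlib

/-- The `k`-th triangular number `T_k = k(k+1)/2`. -/
def tri (k : ℕ) : ℕ := k * (k + 1) / 2

/-- `tau r` is the largest `k` such that `T_k ≤ r`. -/
def tau (r : ℕ) : ℕ := Nat.findGreatest (fun k => tri k ≤ r) r

/-- The gap `γ(m,n) = m·n − T_{τ(m·n)}`. -/
def gap (m n : ℕ) : ℕ := m * n - tri (tau (m * n))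

/-- `P(m,n)`: the set of primes `p` with `n < p ≤ K(m,n) = τ(m·n)`. -/
def primeSet (m n : ℕ) : Finset ℕ := (Finset.Ioc n (tau (m * n))).filter Nat.Prime

/-- The cells occupied by an axis-aligned rectangle with top-left corner
`pos` and dimensions `dim` (height, width). -/
def rectCells (pos dim : ℕ × ℕ) : Finset (ℕ × ℕ) :=
  Finset.Ico pos.1 (pos.1 + dim.1) ×ˢ Finset.Ico pos.2 (pos.2 + dim.2)

/-- A perfect game of PackIt! on the `m × n` grid: a finite sequence of
axis-aligned rectangles, placed at turns `1, …, K`, such that the rectangle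
placed at turn `t` has area `t` or `t+1`, the rectangles are pairwise
disjoint, and together they cover all `m·n` cells of the grid. -/
structure PerfectPackItGame (m n : ℕ) where
  K : ℕ
  pos : ℕ → ℕ × ℕ
  dim : ℕ → ℕ × ℕ
  area_valid : ∀ t ∈ Finset.Icc 1 K,
    (dim t).1 * (dim t).2 = t ∨ (dim t).1 * (dim t).2 = t + 1
  pairwise_disjoint : ∀ t₁ ∈ Finset.Icc 1 K, ∀ t₂ ∈ Finset.Icc 1 K, t₁ ≠ t₂ →
    Disjoint (rectCells (pos t₁) (dim t₁)) (rectCells (pos t₂) (dim t₂))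
  covers : (Finset.Icc 1 K).biUnion (fun t => rectCells (pos t) (dim t)) =
    Finset.range m ×ˢ Finset.range n

section AuxPackIt
open Finset ArithmeticFunction

lemma rectCells_card (pos dim : ℕ × ℕ) : (rectCells pos dim).card = dim.1 * dim.2 := by
  simp [rectCells]

lemma tri_succ (k : ℕ) : tri (k + 1) = tri k + (k + 1) := by
  have h : (k + 1) * (k + 1 + 1) = k * (k + 1) + (k + 1) * 2 := by ring
  simp only [tri, h, Nat.add_mul_div_right _ _ (by norm_num : (0:ℕ) < 2)]

lemma sum_Icc_id (K : ℕ) : ∑ t ∈ Finset.Icc 1 K, t = tri K := by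
  induction K with
  | zero => simp [tri]
  | succ k ih => rw [Finset.sum_Icc_succ_top (by omega), ih, tri_succ]

lemma self_le_tri (k : ℕ) : k ≤ tri k := by
  induction k with
  | zero => simp [tri]
  | succ m ih => rw [tri_succ]; omega

lemma card_primeSet_le_gap {n : ℕ} (hn : 0 < n) (g : PerfectPackItGame n n) :
    (primeSet n n).card ≤ gap n n := by
  classical
  set K := g.K with hK
  have harea : ∀ t ∈ Finset.Icc 1 K, (rectCells (g.pos t) (g.dim t)).card = (g.dim t).1 * (g.dim t).2 :=
    fun t _ => rectCells_card _ _
  -- total area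
  have hsum : ∑ t ∈ Finset.Icc 1 K, (g.dim t).1 * (g.dim t).2 = n * n := by
    have := g.covers
    calc ∑ t ∈ Finset.Icc 1 K, (g.dim t).1 * (g.dim t).2
        = ∑ t ∈ Finset.Icc 1 K, (rectCells (g.pos t) (g.dim t)).card := by
          exact (Finset.sum_congr rfl harea).symm
      _ = ((Finset.Icc 1 K).biUnion (fun t => rectCells (g.pos t) (g.dim t))).card := by
          exact (Finset.card_biUnion (fun t ht s hs hne => g.pairwise_disjoint t ht s hs hne)).symm
      _ = n * n := by rw [g.covers]; simp [Finset.card_product]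
  have hlow : ∀ t ∈ Finset.Icc 1 K, t ≤ (g.dim t).1 * (g.dim t).2 := by
    intro t ht; rcases g.area_valid t ht with h | h <;> omega
  have hhigh : ∀ t ∈ Finset.Icc 1 K, (g.dim t).1 * (g.dim t).2 ≤ t + 1 := by
    intro t ht; rcases g.area_valid t ht with h | h <;> omega
  have htriK : tri K ≤ n * n := by
    rw [← hsum, ← sum_Icc_id K]
    exact Finset.sum_le_sum hlow
  have hupp : n * n ≤ tri K + K := by
    rw [← hsum]
    calc ∑ t ∈ Finset.Icc 1 K, (g.dim t).1 * (g.dim t).2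
        ≤ ∑ t ∈ Finset.Icc 1 K, (t + 1) := Finset.sum_le_sum hhigh
      _ = tri K + K := by
          rw [Finset.sum_add_distrib, sum_Icc_id]
          simp [Nat.card_Icc]
  -- tau (n*n) = K
  have htau : tau (n * n) = K := by
    rw [tau, Nat.findGreatest_eq_iff]
    refine ⟨le_trans (self_le_tri K) htriK, fun _ => htriK, ?_⟩
    intro j hj hj' hP
    have h1 : tri (K + 1) ≤ tri j := by
      have : ∀ a b, a ≤ b → tri a ≤ tri b := by
        intro a b hab
        simp only [tri]
        have : a * (a+1) ≤ b * (b+1) := Nat.mul_le_mul hab (by omega)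
        omega
      exact this _ _ hj
    rw [tri_succ] at h1
    omega
  -- each rectangle fits in the grid
  have hfits : ∀ t ∈ Finset.Icc 1 K, (g.dim t).1 ≤ n ∧ (g.dim t).2 ≤ n := by
    intro t ht
    have hsub : rectCells (g.pos t) (g.dim t) ⊆ Finset.range n ×ˢ Finset.range n := by
      rw [← g.covers]
      exact Finset.subset_biUnion_of_mem (fun t => rectCells (g.pos t) (g.dim t)) ht
    have hpos : 0 < (g.dim t).1 * (g.dim t).2 :=
      lt_of_lt_of_le (Finset.mem_Icc.mp ht).1 (hlow t ht)
    have h1 : 0 < (g.dim t).1 := by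
      rcases Nat.eq_zero_or_pos (g.dim t).1 with h | h
      · rw [h, zero_mul] at hpos; omega
      · exact h
    have h2 : 0 < (g.dim t).2 := by
      rcases Nat.eq_zero_or_pos (g.dim t).2 with h | h
      · rw [h, mul_zero] at hpos; omega
      · exact h
    have hmem : ((g.pos t).1 + (g.dim t).1 - 1, (g.pos t).2 + (g.dim t).2 - 1) ∈
        rectCells (g.pos t) (g.dim t) := by
      simp only [rectCells, Finset.mem_product, Finset.mem_Ico]
      omega
    have := hsub hmem
    simp only [Finset.mem_product, Finset.mem_range] at this
    omega
  -- prime turns are bumped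
  have hbump : ∀ p ∈ primeSet n n, (g.dim p).1 * (g.dim p).2 = p + 1 := by
    intro p hp
    simp only [primeSet, Finset.mem_filter, Finset.mem_Ioc, htau] at hp
    obtain ⟨⟨hnp, hpK⟩, hprime⟩ := hp
    have hpIcc : p ∈ Finset.Icc 1 K := Finset.mem_Icc.mpr ⟨hprime.one_lt.le, hpK⟩
    rcases g.area_valid p hpIcc with h | h
    · exfalso
      obtain ⟨hd1, hd2⟩ := hfits p hpIcc
      have hdvd : (g.dim p).1 ∣ p := ⟨(g.dim p).2, h.symm⟩
      rcases (Nat.Prime.eq_one_or_self_of_dvd hprime _ hdvd) with h1 | h1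
      · rw [h1, one_mul] at h; omega
      · omega
    · exact h
  -- count bumps
  have hsubset : primeSet n n ⊆ Finset.Icc 1 K := by
    intro p hp
    simp only [primeSet, Finset.mem_filter, Finset.mem_Ioc, htau] at hp
    exact Finset.mem_Icc.mpr ⟨hp.2.one_lt.le, hp.1.2⟩
  have hgap : gap n n = ∑ t ∈ Finset.Icc 1 K, ((g.dim t).1 * (g.dim t).2 - t) := by
    rw [gap, htau, ← hsum, ← sum_Icc_id K, (Finset.sum_tsub_distrib _ hlow).symm]
  rw [hgap]
  calc (primeSet n n).card = ∑ p ∈ primeSet n n, ((g.dim p).1 * (g.dim p).2 - p) := by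
        rw [Finset.card_eq_sum_ones]
        refine Finset.sum_congr rfl fun p hp => ?_
        rw [hbump p hp]
        omega
    _ ≤ ∑ t ∈ Finset.Icc 1 K, ((g.dim t).1 * (g.dim t).2 - t) :=
        Finset.sum_le_sum_of_subset hsubset

noncomputable def chebPsi (N : ℕ) : ℝ := ∑ m ∈ Finset.Ioc 0 N, Λ m
noncomputable def TT (N : ℕ) : ℝ := ∑ k ∈ Finset.Ioc 0 N, Real.log k

def fZ (q : ℕ) : ℤ := (q : ℤ) - (q / 2 : ℕ) - (q / 3 : ℕ) - (q / 5 : ℕ) + (q / 30 : ℕ)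

lemma fZ_nonneg (q : ℕ) : 0 ≤ fZ q := by unfold fZ; omega

lemma fZ_le_one (q : ℕ) : fZ q ≤ 1 := by unfold fZ; omega

lemma fZ_eq_one {q : ℕ} (h1 : 1 ≤ q) (h6 : q < 6) : fZ q = 1 := by unfold fZ; omega

lemma TT_eq (N : ℕ) : TT N = ∑ m ∈ Finset.Ioc 0 N, Λ m * ((N / m : ℕ) : ℝ) := by
  induction N with
  | zero => simp [TT]
  | succ N ih =>
    have key : ∑ m ∈ Finset.Ioc 0 (N+1), (if m ∣ N + 1 then Λ m else 0)
        = Real.log (N+1) := by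
      rw [← Finset.sum_filter]
      have hdiv : Finset.filter (· ∣ N+1) (Finset.Ioc 0 (N+1)) = (N+1).divisors := by
        ext m
        simp only [Finset.mem_filter, Finset.mem_Ioc, Nat.mem_divisors]
        constructor
        · rintro ⟨_, h⟩; exact ⟨h, Nat.succ_ne_zero N⟩
        · rintro ⟨h, _⟩
          exact ⟨⟨Nat.pos_of_dvd_of_pos h (Nat.succ_pos N), Nat.le_of_dvd (Nat.succ_pos N) h⟩, h⟩
      rw [hdiv, ArithmeticFunction.vonMangoldt_sum]
      norm_cast
    have hTT : TT (N+1) = TT N + Real.log (N+1) := by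
      rw [TT, Finset.sum_Ioc_succ_top (Nat.zero_le _), ← TT]
      push_cast
      ring
    rw [hTT, ih, Finset.sum_Ioc_succ_top (Nat.zero_le _)]
    have hstep : ∀ m ∈ Finset.Ioc 0 N, Λ m * (((N + 1) / m : ℕ) : ℝ)
        = Λ m * ((N / m : ℕ) : ℝ) + (if m ∣ N + 1 then Λ m else 0) := by
      intro m hm
      rw [Nat.succ_div]
      split <;> push_cast <;> ring
    rw [Finset.sum_congr rfl hstep, Finset.sum_add_distrib]
    rw [Finset.sum_Ioc_succ_top (Nat.zero_le _)] at key
    rw [if_pos (dvd_refl (N+1))] at key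
    rw [Nat.div_self (Nat.succ_pos N)]
    push_cast
    linarith [key]

lemma TT_div_eq (N d : ℕ) (hd : 0 < d) :
    TT (N / d) = ∑ m ∈ Finset.Ioc 0 N, Λ m * ((N / m / d : ℕ) : ℝ) := by
  have h1 : ∀ m, N / d / m = N / m / d := fun m => by
    rw [Nat.div_div_eq_div_mul, Nat.div_div_eq_div_mul, Nat.mul_comm]
  rw [TT_eq, Finset.sum_congr rfl (fun m (_ : m ∈ Finset.Ioc 0 (N/d)) => by rw [h1 m])]
  apply Finset.sum_subset (Finset.Ioc_subset_Ioc le_rfl (Nat.div_le_self N d))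
  intro m hm hnotm
  simp only [Finset.mem_Ioc] at hm hnotm
  have hlt : N / d < m := by omega
  have h0 : N / m / d = 0 := by rw [← h1 m]; exact Nat.div_eq_of_lt hlt
  rw [h0]
  simp

noncomputable def EE (N : ℕ) : ℝ := TT N - TT (N/2) - TT (N/3) - TT (N/5) + TT (N/30)

lemma EE_eq (N : ℕ) : EE N = ∑ m ∈ Finset.Ioc 0 N, Λ m * ((fZ (N/m) : ℤ) : ℝ) := by
  rw [EE, TT_eq, TT_div_eq N 2 (by norm_num), TT_div_eq N 3 (by norm_num),
    TT_div_eq N 5 (by norm_num), TT_div_eq N 30 (by norm_num),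
    ← Finset.sum_sub_distrib, ← Finset.sum_sub_distrib, ← Finset.sum_sub_distrib,
    ← Finset.sum_add_distrib]
  refine Finset.sum_congr rfl fun m _ => ?_
  simp only [fZ, Int.cast_add, Int.cast_sub, Int.cast_natCast]
  ring

lemma EE_le_psi (N : ℕ) : EE N ≤ chebPsi N := by
  rw [EE_eq, chebPsi]
  refine Finset.sum_le_sum fun m _ => ?_
  have h1 : ((fZ (N/m) : ℤ) : ℝ) ≤ 1 := by exact_mod_cast fZ_le_one (N/m)
  have h2 : (0:ℝ) ≤ Λ m := vonMangoldt_nonneg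
  nlinarith

lemma psi_sub_le_EE (N : ℕ) : chebPsi N - chebPsi (N/6) ≤ EE N := by
  have hsplit : chebPsi (N/6) + ∑ m ∈ Finset.Ioc (N/6) N, Λ m = chebPsi N := by
    rw [chebPsi, chebPsi]
    exact Finset.sum_Ioc_consecutive _ (Nat.zero_le _) (Nat.div_le_self N 6)
  have hEsplit : EE N = (∑ m ∈ Finset.Ioc 0 (N/6), Λ m * ((fZ (N/m) : ℤ) : ℝ))
      + ∑ m ∈ Finset.Ioc (N/6) N, Λ m * ((fZ (N/m) : ℤ) : ℝ) := by
    rw [EE_eq, Finset.sum_Ioc_consecutive _ (Nat.zero_le _) (Nat.div_le_self N 6)]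
  have h1 : (0:ℝ) ≤ ∑ m ∈ Finset.Ioc 0 (N/6), Λ m * ((fZ (N/m) : ℤ) : ℝ) := by
    refine Finset.sum_nonneg fun m _ => mul_nonneg vonMangoldt_nonneg ?_
    exact_mod_cast fZ_nonneg (N/m)
  have h2 : ∑ m ∈ Finset.Ioc (N/6) N, Λ m * ((fZ (N/m) : ℤ) : ℝ)
      = ∑ m ∈ Finset.Ioc (N/6) N, Λ m := by
    refine Finset.sum_congr rfl fun m hm => ?_
    simp only [Finset.mem_Ioc] at hm
    have hm0 : 0 < m := lt_of_le_of_lt (Nat.zero_le _) (lt_of_le_of_lt (Nat.zero_le _) hm.1)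
    have hge : 1 ≤ N / m := (Nat.one_le_div_iff hm0).mpr hm.2
    have hlt : N / m < 6 := by
      rw [Nat.div_lt_iff_lt_mul hm0]
      have := (Nat.div_lt_iff_lt_mul (by norm_num : 0 < 6)).mp hm.1
      omega
    rw [fZ_eq_one hge hlt]
    simp
  linarith [hEsplit, h1, h2, hsplit]

lemma log_succ_sub_log {N : ℕ} (hN : 1 ≤ N) :
    1/((N:ℝ)+1) ≤ Real.log ((N:ℝ)+1) - Real.log N ∧
    Real.log ((N:ℝ)+1) - Real.log N ≤ 1/(N:ℝ) := by
  have hN0 : (0:ℝ) < N := by exact_mod_cast hN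
  have hN1 : (0:ℝ) < (N:ℝ) + 1 := by linarith
  have hlogdiv : Real.log (((N:ℝ)+1)/N) = Real.log ((N:ℝ)+1) - Real.log N :=
    Real.log_div (by positivity) (by positivity)
  have hlogdiv2 : Real.log ((N:ℝ)/((N:ℝ)+1)) = Real.log N - Real.log ((N:ℝ)+1) :=
    Real.log_div (by positivity) (by positivity)
  constructor
  · have := Real.log_le_sub_one_of_pos (show (0:ℝ) < (N:ℝ)/((N:ℝ)+1) by positivity)
    rw [hlogdiv2] at this
    have h2 : (N:ℝ)/((N:ℝ)+1) - 1 = -(1/((N:ℝ)+1)) := by field_simp; ring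
    rw [h2] at this
    linarith
  · have := Real.log_le_sub_one_of_pos (show (0:ℝ) < ((N:ℝ)+1)/N by positivity)
    rw [hlogdiv] at this
    have h2 : ((N:ℝ)+1)/(N:ℝ) - 1 = 1/(N:ℝ) := by field_simp; ring
    rw [h2] at this
    linarith

lemma TT_bounds : ∀ N : ℕ, 1 ≤ N →
    (N:ℝ)*Real.log N - N + 1 ≤ TT N ∧ TT N ≤ (N:ℝ)*Real.log N - N + 1 + Real.log N := by
  intro N
  induction N with
  | zero => omega
  | succ N ih =>
    intro _
    rcases Nat.eq_zero_or_pos N with h0 | hN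
    · subst h0
      have h1 : TT 1 = 0 := by
        rw [TT, show Finset.Ioc 0 1 = {1} from rfl]
        simp
      rw [h1]
      norm_num [Real.log_one]
    obtain ⟨ih1, ih2⟩ := ih hN
    have hTT : TT (N+1) = TT N + Real.log ((N:ℝ)+1) := by
      rw [TT, Finset.sum_Ioc_succ_top (Nat.zero_le _), ← TT]
      push_cast
      ring
    obtain ⟨kb1, kb2⟩ := log_succ_sub_log hN
    have hN0 : (1:ℝ) ≤ N := by exact_mod_cast hN
    push_cast
    rw [hTT]
    have hNpos : (0:ℝ) < N := by linarith
    have e1 : (N:ℝ) * (Real.log ((N:ℝ)+1) - Real.log N) ≤ 1 := by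
      calc (N:ℝ) * (Real.log ((N:ℝ)+1) - Real.log N) ≤ (N:ℝ) * (1/(N:ℝ)) :=
            mul_le_mul_of_nonneg_left kb2 (by linarith)
        _ = 1 := by field_simp
    have e2 : 1 ≤ ((N:ℝ)+1) * (Real.log ((N:ℝ)+1) - Real.log N) := by
      calc (1:ℝ) = ((N:ℝ)+1) * (1/((N:ℝ)+1)) := by field_simp
        _ ≤ ((N:ℝ)+1) * (Real.log ((N:ℝ)+1) - Real.log N) :=
            mul_le_mul_of_nonneg_left kb1 (by linarith)
    constructor
    · nlinarith [e1]
    · nlinarith [e2]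

noncomputable def AC : ℝ := Real.log 2 / 2 + Real.log 3 / 3 + Real.log 5 / 5 - Real.log 30 / 30

lemma log30_eq : Real.log 30 = Real.log 2 + Real.log 3 + Real.log 5 := by
  rw [show (30:ℝ) = 2*3*5 by norm_num, Real.log_mul (by norm_num) (by norm_num),
    Real.log_mul (by norm_num) (by norm_num)]

lemma AC_ge : 1/5 ≤ AC := by
  have h2 := Real.log_two_gt_d9
  have h3 : (0:ℝ) ≤ Real.log 3 := Real.log_nonneg (by norm_num)
  have h5 : (0:ℝ) ≤ Real.log 5 := Real.log_nonneg (by norm_num)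
  rw [AC, log30_eq]
  nlinarith

lemma AC_le : AC ≤ 2 := by
  have h2 : Real.log 2 ≤ 1 := by linarith [Real.log_le_sub_one_of_pos (by norm_num : (0:ℝ) < 2)]
  have h3 : Real.log 3 ≤ 2 := by linarith [Real.log_le_sub_one_of_pos (by norm_num : (0:ℝ) < 3)]
  have h5 : Real.log 5 ≤ 4 := by linarith [Real.log_le_sub_one_of_pos (by norm_num : (0:ℝ) < 5)]
  have h2' : (0:ℝ) ≤ Real.log 2 := Real.log_nonneg (by norm_num)
  have h3' : (0:ℝ) ≤ Real.log 3 := Real.log_nonneg (by norm_num)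
  have h5' : (0:ℝ) ≤ Real.log 5 := Real.log_nonneg (by norm_num)
  rw [AC, log30_eq]
  nlinarith

lemma main_id (x : ℝ) (hx : 0 < x) :
    (x*Real.log x - x) - (x/2*Real.log (x/2) - x/2) - (x/3*Real.log (x/3) - x/3)
      - (x/5*Real.log (x/5) - x/5) + (x/30*Real.log (x/30) - x/30) = AC * x := by
  rw [Real.log_div (ne_of_gt hx) (by norm_num), Real.log_div (ne_of_gt hx) (by norm_num),
    Real.log_div (ne_of_gt hx) (by norm_num), Real.log_div (ne_of_gt hx) (by norm_num),
    AC, log30_eq]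
  ring

lemma xlogx_diff {x y : ℝ} (hx : 1 ≤ x) (hxy : x ≤ y) :
    0 ≤ y*Real.log y - x*Real.log x ∧
    y*Real.log y - x*Real.log x ≤ (y-x)*(Real.log y + 1) := by
  have hx0 : (0:ℝ) < x := by linarith
  have hy1 : (1:ℝ) ≤ y := le_trans hx hxy
  have hy0 : (0:ℝ) < y := by linarith
  have hlogxy : Real.log x ≤ Real.log y := Real.log_le_log hx0 hxy
  have hlogy0 : 0 ≤ Real.log y := Real.log_nonneg hy1
  have hlogx0 : 0 ≤ Real.log x := Real.log_nonneg hx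
  constructor
  · nlinarith
  · have hdiv : Real.log (y/x) = Real.log y - Real.log x :=
      Real.log_div (ne_of_gt hy0) (ne_of_gt hx0)
    have h1 : Real.log (y/x) ≤ y/x - 1 := Real.log_le_sub_one_of_pos (by positivity)
    have h2 : x * Real.log (y/x) ≤ x * (y/x - 1) :=
      mul_le_mul_of_nonneg_left h1 (le_of_lt hx0)
    have h3 : x * (y/x - 1) = y - x := by field_simp
    nlinarith [h2, h3, hdiv]

lemma TT_near (N d : ℕ) (hd : 1 ≤ d) (hdN : d ≤ N) :
    |TT (N/d) - ((N:ℝ)/d * Real.log ((N:ℝ)/d) - (N:ℝ)/d)| ≤ Real.log N + 2 := by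
  have hd0 : 0 < d := hd
  have hN0 : 0 < N := lt_of_lt_of_le hd0 hdN
  set m : ℕ := N / d with hm
  have hm1 : 1 ≤ m := (Nat.one_le_div_iff hd0).mpr hdN
  set y : ℝ := (N:ℝ)/d with hy
  have hd0' : (0:ℝ) < d := by exact_mod_cast hd0
  have hmy : (m:ℝ) ≤ y := Nat.cast_div_le
  have hym : y ≤ (m:ℝ) + 1 := by
    have h := (Nat.div_lt_iff_lt_mul hd0).mp (Nat.lt_succ_self m)
    have h' : (N:ℝ) < ((m:ℝ)+1) * d := by exact_mod_cast h
    rw [hy, div_le_iff₀ hd0']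
    linarith
  have hm1' : (1:ℝ) ≤ (m:ℝ) := by exact_mod_cast hm1
  have hy1 : (1:ℝ) ≤ y := le_trans hm1' hmy
  have hyN : y ≤ (N:ℝ) := by
    rw [hy, div_le_iff₀ hd0']
    have h1 : (1:ℝ) ≤ (d:ℝ) := by exact_mod_cast hd
    have hN0' : (0:ℝ) ≤ (N:ℝ) := by positivity
    nlinarith
  have hlogyN : Real.log y ≤ Real.log N := Real.log_le_log (by linarith) hyN
  have hlogmN : Real.log m ≤ Real.log N :=
    Real.log_le_log (by linarith) (le_trans hmy hyN)
  have hlogN0 : 0 ≤ Real.log N := Real.log_nonneg (by exact_mod_cast hN0)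
  obtain ⟨hTl, hTu⟩ := TT_bounds m hm1
  obtain ⟨hdl, hdu⟩ := xlogx_diff hm1' hmy
  have hbound : (y - m) * (Real.log y + 1) ≤ Real.log N + 1 := by
    have h1 : y - (m:ℝ) ≤ 1 := by linarith
    have h2 : 0 ≤ Real.log y := Real.log_nonneg hy1
    nlinarith
  rw [abs_le]
  constructor
  · linarith
  · linarith

lemma EE_near (N : ℕ) (hN : 30 ≤ N) : |EE N - AC * N| ≤ 5*Real.log N + 10 := by
  have hN0 : (0:ℝ) < N := by exact_mod_cast lt_of_lt_of_le (by norm_num : 0 < 30) hN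
  have t1 := TT_near N 1 le_rfl (le_trans (by norm_num) hN)
  have t2 := TT_near N 2 (by norm_num) (le_trans (by norm_num) hN)
  have t3 := TT_near N 3 (by norm_num) (le_trans (by norm_num) hN)
  have t5 := TT_near N 5 (by norm_num) (le_trans (by norm_num) hN)
  have t30 := TT_near N 30 (by norm_num) hN
  rw [Nat.div_one] at t1
  rw [Nat.cast_one, div_one] at t1
  have hid := main_id (N:ℝ) hN0
  rw [abs_le] at t1 t2 t3 t5 t30 ⊢
  unfold EE
  constructor
  · push_cast at *
    linarith
  · push_cast at *
    linarith

lemma psi_le_TT (N : ℕ) : chebPsi N ≤ TT N :=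
  Finset.sum_le_sum fun m _ => vonMangoldt_le_log

lemma psi_nonneg (N : ℕ) : 0 ≤ chebPsi N :=
  Finset.sum_nonneg fun m _ => vonMangoldt_nonneg

lemma psi_mono {N M : ℕ} (h : N ≤ M) : chebPsi N ≤ chebPsi M :=
  Finset.sum_le_sum_of_subset_of_nonneg (Finset.Ioc_subset_Ioc le_rfl h)
    (fun _ _ _ => vonMangoldt_nonneg)

lemma psi_upper : ∀ N : ℕ, chebPsi N ≤ 6/5*AC*N + 1000*Real.sqrt N := by
  intro N
  induction N using Nat.strong_induction_on with
  | _ N ih =>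
  have hAC0 : 0 ≤ AC := le_trans (by norm_num) AC_ge
  rcases Nat.eq_zero_or_pos N with h0 | hNpos
  · subst h0
    simp [chebPsi]
  rcases lt_or_ge N 30 with h30 | h30
  · -- small case
    have hsqrt1 : (1:ℝ) ≤ Real.sqrt N := by
      rw [show (1:ℝ) = Real.sqrt 1 by simp]
      exact Real.sqrt_le_sqrt (by exact_mod_cast hNpos)
    have hTT : TT N ≤ 841 := by
      rw [TT]
      calc ∑ k ∈ Finset.Ioc 0 N, Real.log k
          ≤ ∑ k ∈ Finset.Ioc 0 N, (29:ℝ) := by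
            refine Finset.sum_le_sum fun k hk => ?_
            simp only [Finset.mem_Ioc] at hk
            have hk0 : (0:ℝ) < k := by exact_mod_cast hk.1
            have hk29 : (k:ℝ) ≤ 30 := by
              have : k ≤ 30 := by omega
              exact_mod_cast this
            have := Real.log_le_sub_one_of_pos hk0
            linarith
        _ = (N:ℝ) * 29 := by
            rw [Finset.sum_const, Nat.card_Ioc]
            simp
        _ ≤ 841 := by
            have : (N:ℝ) ≤ 29 := by exact_mod_cast Nat.lt_succ_iff.mp (by omega : N < 30)
            nlinarith
    have := psi_le_TT N
    have hNR : (0:ℝ) ≤ (N:ℝ) := by positivity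
    nlinarith
  · -- main case
    have h6 : N / 6 < N := Nat.div_lt_self hNpos (by norm_num)
    have ihd := ih (N/6) h6
    have hEE := (abs_le.mp (EE_near N h30)).2
    have hsplit := psi_sub_le_EE N
    have h4 : ((N/6:ℕ):ℝ) ≤ (N:ℝ)/6 := Nat.cast_div_le
    have h5 : 6/5*AC*((N/6:ℕ):ℝ) ≤ 6/5*AC*((N:ℝ)/6) := by
      apply mul_le_mul_of_nonneg_left h4
      positivity
    have h6' : Real.sqrt ((N/6:ℕ):ℝ) ≤ Real.sqrt (N:ℝ) / 2 := by
      have ha : Real.sqrt ((N/6:ℕ):ℝ) ≤ Real.sqrt ((N:ℝ)/4) := by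
        apply Real.sqrt_le_sqrt
        have : (N:ℝ)/6 ≤ (N:ℝ)/4 := by
          have : (0:ℝ) ≤ (N:ℝ) := by positivity
          linarith
        linarith
      have hb : Real.sqrt ((N:ℝ)/4) = Real.sqrt (N:ℝ) / 2 := by
        rw [show (N:ℝ)/4 = ((1:ℝ)/2)^2 * N by ring, Real.sqrt_mul (by positivity),
          Real.sqrt_sq (by norm_num : (0:ℝ) ≤ 1/2)]
        ring
      linarith
    have h7 : Real.log N ≤ 2*Real.sqrt N := by
      have hs : Real.log (Real.sqrt N) = Real.log N / 2 := Real.log_sqrt (by positivity)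
      have hs2 : Real.log (Real.sqrt N) ≤ Real.sqrt N - 1 := by
        apply Real.log_le_sub_one_of_pos
        rw [show (0:ℝ) = Real.sqrt 0 by simp]
        apply Real.sqrt_lt_sqrt le_rfl
        exact_mod_cast hNpos
      linarith
    have hsqrt1 : (1:ℝ) ≤ Real.sqrt N := by
      rw [show (1:ℝ) = Real.sqrt 1 by simp]
      exact Real.sqrt_le_sqrt (by exact_mod_cast hNpos)
    linarith

lemma psi_lower (N : ℕ) (hN : 30 ≤ N) : AC*N - (5*Real.log N + 10) ≤ chebPsi N := by
  have := (abs_le.mp (EE_near N hN)).1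
  linarith [EE_le_psi N]

lemma tri_mono : Monotone tri := by
  intro a b hab
  have : a * (a+1) ≤ b * (b+1) := Nat.mul_le_mul hab (by omega)
  exact Nat.div_le_div_right this

lemma tri_tau_le (r : ℕ) : tri (tau r) ≤ r := by
  have h : tri 0 ≤ r := by simp [tri]
  unfold tau
  exact Nat.findGreatest_spec (P := fun k => tri k ≤ r) (Nat.zero_le r) h

lemma lt_tri {m : ℕ} (hm : 2 ≤ m) : m < tri m := by
  induction m with
  | zero => omega
  | succ k ih =>
    have h : tri (k+1) = tri k + (k+1) := by
      have e : (k + 1) * (k + 1 + 1) = k * (k + 1) + (k + 1) * 2 := by ring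
      simp only [tri, e, Nat.add_mul_div_right _ _ (by norm_num : (0:ℕ) < 2)]
    rcases Nat.lt_or_ge k 2 with hk | hk
    · interval_cases k <;> simp_all [tri]
    · have := ih hk; omega

lemma tri_tau_succ {r : ℕ} (hr : 2 ≤ r) : r < tri (tau r + 1) := by
  by_contra h
  push_neg at h
  have htau_lt : tau r < r := by
    rcases Nat.lt_or_ge (tau r) r with h1 | h1
    · exact h1
    · exfalso
      have h2 : tau r ≤ r := Nat.findGreatest_le r
      have h3 : tau r = r := le_antisymm h2 h1
      have h4 := tri_tau_le r
      rw [h3] at h4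
      exact absurd h4 (not_le.mpr (lt_tri hr))
  have hgr := Nat.findGreatest_is_greatest (P := fun k => tri k ≤ r) (n := r)
    (k := tau r + 1) (by unfold tau; omega) (by omega)
  exact hgr h

set_option maxHeartbeats 1600000 in
lemma primes_eventually (c : ℕ) : ∃ N₀ : ℕ, ∀ n : ℕ, N₀ ≤ n →
    c < ((Finset.Ioc n (tau (n*n))).filter Nat.Prime).card := by
  set M : ℕ := 400 * c + 70051 with hM
  refine ⟨M^8, fun n hn => ?_⟩
  by_contra hcon
  push_neg at hcon
  -- basic sizes
  have hMge : 70051 ≤ M := by omega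
  have hn30 : 70051 ≤ n := le_trans hMge (le_trans (Nat.le_self_pow (by norm_num) M) hn)
  set K : ℕ := tau (n*n) with hK
  have hr2 : 2 ≤ n * n := by nlinarith
  have htri1 : tri K ≤ n * n := tri_tau_le _
  have htri2 : n * n < tri (K + 1) := tri_tau_succ hr2
  -- K < 2n
  have hK2n : K < 2 * n := by
    by_contra hh
    push_neg at hh
    have h1 : tri (2*n) ≤ tri K := tri_mono hh
    have h2 : tri (2*n) = n * (2*n+1) := by
      simp only [tri]
      rw [show 2*n*(2*n+1) = (n*(2*n+1))*2 by ring, Nat.mul_div_cancel _ (by norm_num : (0:ℕ) < 2)]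
    nlinarith
  -- 7n < 5(K+2)
  have h7n : 7 * n < 5 * (K + 2) := by
    have heven : 2 ∣ (K+1) * (K+2) := (Nat.even_mul_succ_self (K+1)).two_dvd
    have h1 : tri (K+1) * 2 = (K+1) * (K+2) := by
      simp only [tri]
      rw [Nat.div_mul_cancel heven]
    have h2 : 2 * (n*n) + 2 ≤ (K+1)*(K+2) := by omega
    by_contra hh
    push_neg at hh
    nlinarith
  have hnK : n < K := by omega
  have hK30 : 30 ≤ K := by omega
  -- real versions
  set x : ℝ := (n : ℝ) with hx
  have hx30 : (70051:ℝ) ≤ x := by rw [hx]; exact_mod_cast hn30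
  have hKx : (K:ℝ) < 2 * x := by rw [hx]; exact_mod_cast hK2n
  have hKlow : 7 * x < 5 * (K:ℝ) + 10 := by
    have h' : (7 * n : ℕ) < (5 * (K + 2) : ℕ) := h7n
    have h'' : ((7*n : ℕ):ℝ) < ((5*(K+2) : ℕ):ℝ) := by exact_mod_cast h'
    push_cast at h''
    rw [hx]
    linarith
  have hK1 : (1:ℝ) ≤ (K:ℝ) := by
    have : (1:ℕ) ≤ K := by omega
    exact_mod_cast this
  set L : ℝ := Real.log (2*x) with hL
  have hLpos : 0 ≤ L := Real.log_nonneg (by linarith)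
  have hlogK : Real.log (K:ℝ) ≤ L := Real.log_le_log (by linarith) (le_of_lt hKx)
  -- the sum S over Ioc n K
  have hS : chebPsi n + ∑ m ∈ Finset.Ioc n K, Λ m = chebPsi K := by
    rw [chebPsi, chebPsi]
    exact Finset.sum_Ioc_consecutive _ (Nat.zero_le _) (le_of_lt hnK)
  have hpsiK := psi_lower K hK30
  have hpsin := psi_upper n
  have hlowS : AC/5 * x - 2*AC - 5*L - 10 - 1000*Real.sqrt x ≤ ∑ m ∈ Finset.Ioc n K, Λ m := by
    have hACpos : (0:ℝ) < AC := lt_of_lt_of_le (by norm_num) AC_ge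
    have hKge : (7*x - 10)/5 ≤ (K:ℝ) := by linarith
    have h1 : AC * ((7*x - 10)/5) ≤ AC * (K:ℝ) :=
      mul_le_mul_of_nonneg_left hKge (le_of_lt hACpos)
    have h3 : AC * ((7*x-10)/5) = 7/5*AC*x - 2*AC := by ring
    have hpsin' : chebPsi n ≤ 6/5*AC*x + 1000*Real.sqrt x := by rw [hx]; exact hpsin
    linarith [hpsiK, hpsin', hS, hlogK, h1, h3]
  -- upper bound via prime counting
  set s₂ : Finset ℕ := ((Finset.Ioc n K).filter (fun m => ¬ m.Prime)).filter IsPrimePow with hs₂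
  have hLam : ∀ m ∈ Finset.Ioc n K, Λ m ≤ L := by
    intro m hm
    simp only [Finset.mem_Ioc] at hm
    have h1 : (m:ℝ) ≤ 2*x := by
      have : (m:ℝ) ≤ (K:ℝ) := by exact_mod_cast hm.2
      linarith
    calc Λ m ≤ Real.log m := vonMangoldt_le_log
      _ ≤ L := Real.log_le_log (by exact_mod_cast lt_of_le_of_lt (Nat.zero_le n) hm.1) h1
  have hupS : ∑ m ∈ Finset.Ioc n K, Λ m ≤ ((c:ℝ) + (s₂.card:ℝ)) * L := by
    rw [← Finset.sum_filter_add_sum_filter_not (Finset.Ioc n K) Nat.Prime]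
    have hp1 : ∑ m ∈ (Finset.Ioc n K).filter Nat.Prime, Λ m ≤ (c:ℝ) * L := by
      calc ∑ m ∈ (Finset.Ioc n K).filter Nat.Prime, Λ m
          ≤ ∑ m ∈ (Finset.Ioc n K).filter Nat.Prime, L :=
            Finset.sum_le_sum fun m hm => hLam m (Finset.mem_of_mem_filter m hm)
        _ = (((Finset.Ioc n K).filter Nat.Prime).card : ℝ) * L := by
            rw [Finset.sum_const, nsmul_eq_mul]
        _ ≤ (c:ℝ) * L := by
            apply mul_le_mul_of_nonneg_right _ hLpos
            exact_mod_cast hcon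
    have hp2 : ∑ m ∈ (Finset.Ioc n K).filter (fun m => ¬ m.Prime), Λ m ≤ (s₂.card:ℝ) * L := by
      have heq : ∑ m ∈ s₂, Λ m
          = ∑ m ∈ (Finset.Ioc n K).filter (fun m => ¬ m.Prime), Λ m := by
        rw [hs₂]
        apply Finset.sum_filter_of_ne
        intro m _ hΛ
        exact ArithmeticFunction.vonMangoldt_ne_zero_iff.mp hΛ
      rw [← heq]
      calc ∑ m ∈ s₂, Λ m ≤ ∑ m ∈ s₂, L := by
            refine Finset.sum_le_sum fun m hm => ?_
            have : m ∈ Finset.Ioc n K :=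
              Finset.mem_of_mem_filter m (Finset.mem_of_mem_filter m hm)
            exact hLam m this
        _ = (s₂.card:ℝ) * L := by rw [Finset.sum_const, nsmul_eq_mul]
    have := add_le_add hp1 hp2
    linarith
  -- bound on s₂.card
  have hcard2 : s₂.card ≤ (Nat.sqrt K + 1) * (Nat.log 2 K + 1) := by
    have hinj : ∀ m ∈ s₂, m = m.minFac ^ (m.factorization m.minFac) ∧
        m.minFac ≤ Nat.sqrt K ∧ m.factorization m.minFac ≤ Nat.log 2 K := by
      intro m hm
      simp only [hs₂, Finset.mem_filter, Finset.mem_Ioc] at hm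
      obtain ⟨⟨⟨hmn, hmK⟩, hnp⟩, hpp⟩ := hm
      obtain ⟨p, k, hp, hk, rfl⟩ := (isPrimePow_nat_iff _).mp hpp
      have hminFac : (p^k).minFac = p := by
        rw [Nat.pow_minFac (by omega), Nat.Prime.minFac_eq hp]
      have hfact : (p^k).factorization p = k := by
        rw [hp.factorization_pow, Finsupp.single_eq_same]
      have hk2 : 2 ≤ k := by
        by_contra hlt
        push_neg at hlt
        have hk1 : k = 1 := by omega
        rw [hk1, pow_one] at hnp
        exact hnp hp
      have hpp2 : p * p ≤ K := by
        have h1 : p^2 ≤ p^k := Nat.pow_le_pow_right hp.pos hk2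
        have h2 : p^2 = p * p := sq p
        omega
      have hlog : k ≤ Nat.log 2 K := by
        have h1 : 2^k ≤ p^k := Nat.pow_le_pow_left hp.two_le k
        have h2 : 2^k ≤ K := le_trans h1 hmK
        exact (Nat.le_log_iff_pow_le (by norm_num) (by omega)).mpr h2
      rw [hminFac, hfact]
      exact ⟨rfl, Nat.le_sqrt.mpr hpp2, hlog⟩
    calc s₂.card ≤ ((Finset.range (Nat.sqrt K + 1)) ×ˢ (Finset.range (Nat.log 2 K + 1))).card := by
          apply Finset.card_le_card_of_injOn
            (fun m => (m.minFac, m.factorization m.minFac))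
          · intro m hm
            obtain ⟨_, h1, h2⟩ := hinj m hm
            simp only [Finset.mem_coe, Finset.mem_product, Finset.mem_range]
            omega
          · intro m1 hm1 m2 hm2 heq
            obtain ⟨e1, _, _⟩ := hinj m1 hm1
            obtain ⟨e2, _, _⟩ := hinj m2 hm2
            simp only [Prod.mk.injEq] at heq
            have h3 : m1.minFac ^ (m1.factorization m1.minFac)
                = m2.minFac ^ (m2.factorization m2.minFac) := by
              rw [heq.2, heq.1]
            exact e1.trans (h3.trans e2.symm)
      _ = (Nat.sqrt K + 1) * (Nat.log 2 K + 1) := by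
          rw [Finset.card_product, Finset.card_range, Finset.card_range]
  -- real bound on card2
  have hsqrtK : ((Nat.sqrt K : ℕ) : ℝ) ≤ Real.sqrt (2*x) := by
    rw [Real.le_sqrt (by positivity) (by linarith)]
    have h1 : (Nat.sqrt K) * (Nat.sqrt K) ≤ K := Nat.sqrt_le K
    have h2 : ((Nat.sqrt K : ℕ):ℝ) * ((Nat.sqrt K : ℕ):ℝ) ≤ (K:ℝ) := by exact_mod_cast h1
    rw [sq]
    linarith
  have hlog2K : ((Nat.log 2 K : ℕ) : ℝ) ≤ 2 * L := by
    have h1 : 2 ^ (Nat.log 2 K) ≤ K := Nat.pow_log_le_self 2 (by omega)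
    have h2 : ((2:ℝ)) ^ (Nat.log 2 K) ≤ (K:ℝ) := by exact_mod_cast h1
    have h3 : Real.log ((2:ℝ) ^ (Nat.log 2 K)) ≤ Real.log (K:ℝ) :=
      Real.log_le_log (by positivity) h2
    rw [Real.log_pow] at h3
    have h4 : (1/2:ℝ) ≤ Real.log 2 := le_trans (by norm_num) (le_of_lt Real.log_two_gt_d9)
    have h5 : (0:ℝ) ≤ ((Nat.log 2 K : ℕ):ℝ) := by positivity
    have h6 : ((Nat.log 2 K : ℕ):ℝ) * (1/2) ≤ ((Nat.log 2 K : ℕ):ℝ) * Real.log 2 :=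
      mul_le_mul_of_nonneg_left h4 h5
    linarith [hlogK, h3, h6]
  have hcard2R : (s₂.card : ℝ) ≤ (Real.sqrt (2*x) + 1) * (2*L + 1) := by
    have h1 : (s₂.card : ℝ) ≤ (((Nat.sqrt K + 1) * (Nat.log 2 K + 1) : ℕ) : ℝ) := by
      exact_mod_cast hcard2
    push_cast at h1
    have h3 : ((Nat.sqrt K : ℕ):ℝ) + 1 ≤ Real.sqrt (2*x) + 1 := by linarith
    have h4 : ((Nat.log 2 K : ℕ):ℝ) + 1 ≤ 2*L + 1 := by linarith
    calc (s₂.card : ℝ) ≤ (((Nat.sqrt K : ℕ):ℝ) + 1) * (((Nat.log 2 K : ℕ):ℝ) + 1) := h1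
      _ ≤ (Real.sqrt (2*x) + 1) * (2*L + 1) :=
          mul_le_mul h3 h4 (by positivity) (by positivity)
  -- substitution t = (2x)^(1/8)
  set t : ℝ := Real.sqrt (Real.sqrt (Real.sqrt (2*x))) with ht
  have h2x0 : (0:ℝ) ≤ 2*x := by linarith
  have hs1 : Real.sqrt (2*x) = (t^2)^2 := by
    rw [ht, Real.sq_sqrt (Real.sqrt_nonneg _), Real.sq_sqrt (Real.sqrt_nonneg _)]
  have hs2 : 2*x = ((t^2)^2)^2 := by
    rw [← hs1, Real.sq_sqrt h2x0]
  have ht0 : 0 ≤ t := Real.sqrt_nonneg _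
  have ht1 : 1 ≤ t := by
    rw [ht]
    rw [Real.one_le_sqrt]
    rw [Real.one_le_sqrt]
    rw [Real.one_le_sqrt]
    linarith
  have hLt : L ≤ 8 * t := by
    have e1 : L = Real.log (t^8) := by rw [show (t:ℝ)^8 = ((t^2)^2)^2 by ring, ← hs2]
    have e2 : Real.log (t^8) = 8 * Real.log t := by
      rw [show (t:ℝ)^8 = t^(8:ℕ) by norm_num, Real.log_pow]
      norm_num
    have e3 : Real.log t ≤ t - 1 := Real.log_le_sub_one_of_pos (by linarith)
    rw [e1, e2]
    linarith
  have hsqx : Real.sqrt x ≤ t^4 := by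
    have : Real.sqrt x ≤ Real.sqrt (2*x) := Real.sqrt_le_sqrt (by linarith)
    rw [hs1] at this
    calc Real.sqrt x ≤ (t^2)^2 := this
      _ = t^4 := by ring
  have hsq2x : Real.sqrt (2*x) = t^4 := by rw [hs1]; ring
  -- t is large
  have htM : (M:ℝ) ≤ t := by
    have hMr : (0:ℝ) ≤ (M:ℝ) := by positivity
    have h1 : ((M:ℝ))^8 ≤ 2*x := by
      have h2 : ((M:ℝ))^8 ≤ x := by
        rw [hx]
        exact_mod_cast hn
      linarith
    have h2 : Real.sqrt (((M:ℝ))^8) ≤ Real.sqrt (2*x) := Real.sqrt_le_sqrt h1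
    rw [show ((M:ℝ))^8 = (((M:ℝ))^4)^2 by ring, Real.sqrt_sq (by positivity)] at h2
    have h3 : Real.sqrt (((M:ℝ))^4) ≤ Real.sqrt (Real.sqrt (2*x)) := Real.sqrt_le_sqrt h2
    rw [show ((M:ℝ))^4 = (((M:ℝ))^2)^2 by ring, Real.sqrt_sq (by positivity)] at h3
    have h4 : Real.sqrt (((M:ℝ))^2) ≤ t := Real.sqrt_le_sqrt h3
    rw [Real.sqrt_sq hMr] at h4
    exact h4
  -- final contradiction
  clear_value M x K L t s₂
  have hAC1 : 1/5 ≤ AC := AC_ge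
  have hAC2 : AC ≤ 2 := AC_le
  have hx8 : x = t^8 / 2 := by
    have h : (t:ℝ)^8 = ((t^2)^2)^2 := by ring
    rw [h, ← hs2]
    ring
  have h1t2 : (1:ℝ) ≤ t^2 := by
    simpa using pow_le_pow_left₀ (by norm_num : (0:ℝ) ≤ 1) ht1 2
  have h1t4 : (1:ℝ) ≤ t^4 := by
    simpa using pow_le_pow_left₀ (by norm_num : (0:ℝ) ≤ 1) ht1 4
  have h1t6 : (1:ℝ) ≤ t^6 := by
    simpa using pow_le_pow_left₀ (by norm_num : (0:ℝ) ≤ 1) ht1 6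
  have htle2 : t ≤ t^2 := by
    calc t = t*1 := (mul_one t).symm
      _ ≤ t*t := mul_le_mul_of_nonneg_left ht1 ht0
      _ = t^2 := (sq t).symm
  have ht2le4 : t^2 ≤ t^4 := pow_le_pow_right₀ ht1 (by norm_num)
  have ht4le6 : t^4 ≤ t^6 := pow_le_pow_right₀ ht1 (by norm_num)
  have htle6 : t ≤ t^6 := le_trans htle2 (le_trans ht2le4 ht4le6)
  have hc0 : (0:ℝ) ≤ (c:ℝ) := by positivity
  have hmain : t^8/50 ≤ (8*(c:ℝ) + 1326) * t^6 := by
    have hchain : AC/5 * x - 2*AC - 5*L - 10 - 1000*Real.sqrt x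
        ≤ ((c:ℝ) + (Real.sqrt (2*x) + 1) * (2*L + 1)) * L := by
      calc AC/5 * x - 2*AC - 5*L - 10 - 1000*Real.sqrt x
          ≤ ∑ m ∈ Finset.Ioc n K, Λ m := hlowS
        _ ≤ ((c:ℝ) + (s₂.card:ℝ)) * L := hupS
        _ ≤ ((c:ℝ) + (Real.sqrt (2*x) + 1) * (2*L + 1)) * L := by
            apply mul_le_mul_of_nonneg_right _ hLpos
            linarith [hcard2R]
    rw [hsq2x] at hchain
    have hxlow : t^8/50 ≤ AC/5 * x := by
      have h8 : (0:ℝ) ≤ t^8 := pow_nonneg ht0 8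
      have h9 : 1/5 * t^8 ≤ AC * t^8 := mul_le_mul_of_nonneg_right hAC1 h8
      rw [hx8]; linarith
    have e2 : 2*L + 1 ≤ 17*t := by linarith [hLt, ht1]
    have e1 : t^4 + 1 ≤ 2*t^4 := by linarith
    have efac : (t^4+1)*(2*L+1) ≤ 2*t^4*(17*t) :=
      mul_le_mul e1 e2 (by linarith) (by positivity)
    have e4 : ((c:ℝ) + (t^4 + 1) * (2*L + 1)) * L ≤ ((c:ℝ) + 34*t^5) * (8*t) := by
      apply mul_le_mul _ hLt hLpos (by positivity)
      have e5 : 2*t^4*(17*t) = 34*t^5 := by ring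
      linarith [efac]
    have hRHS : ((c:ℝ) + (t^4 + 1) * (2*L + 1)) * L ≤ 8*(c:ℝ)*t + 272 * t^6 :=
      le_trans e4 (le_of_eq (by ring))
    have hmisc : 2*AC + 5*L + 10 + 1000*Real.sqrt x ≤ 4 + 40*t + 10 + 1000*t^4 := by
      linarith [hsqx, hLt, hAC2]
    have hcle : 8*(c:ℝ)*t ≤ 8*(c:ℝ)*t^6 := by
      have := mul_le_mul_of_nonneg_left htle6 (by positivity : (0:ℝ) ≤ 8*(c:ℝ))
      linarith
    have h4t : (4:ℝ) + 40*t + 10 + 1000*t^4 ≤ 1054*t^6 := by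
      linarith [h1t6, htle6, ht4le6]
    linarith [hchain, hxlow, hRHS, hmisc, hcle, h4t]
  -- but t is at least M, making this impossible
  have hMbig : 50 * (8*(c:ℝ) + 1326) < (M:ℝ) := by
    rw [hM]
    push_cast
    linarith
  have ht6pos : (0:ℝ) < t^6 := lt_of_lt_of_le zero_lt_one h1t6
  have ht2M : (M:ℝ) ≤ t^2 := le_trans htM htle2
  have p1 : t^6 * (M:ℝ) ≤ t^6 * t^2 := mul_le_mul_of_nonneg_left ht2M (le_of_lt ht6pos)
  have p2 : t^6 * (50*(8*(c:ℝ)+1326)) < t^6 * (M:ℝ) :=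
    mul_lt_mul_of_pos_left hMbig ht6pos
  have e : t^6 * t^2 = t^8 := by ring
  linarith [hmain, p1, p2, e]

end AuxPackIt

/-- For every `c ≥ 0`, only finitely many positive integers `n` with
`γ(n,n) = c` are such that the `n × n` grid admits a perfect game of
PackIt!. -/
theorem finitely_many_perfect_with_gap (c : ℕ) :
    {n : ℕ | 0 < n ∧ gap n n = c ∧ Nonempty (PerfectPackItGame n n)}.Finite := by
  obtain ⟨N₀, hN₀⟩ := primes_eventually c
  apply Set.Finite.subset (Set.finite_Iio N₀)
  intro n hn
  simp only [Set.mem_setOf_eq] at hn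
  obtain ⟨hpos, hgap, ⟨g⟩⟩ := hn
  by_contra hge
  simp only [Set.mem_Iio, not_lt] at hge
  have h1 := card_primeSet_le_gap hpos g
  have h2 := hN₀ n hge
  have h3 : c < (primeSet n n).card := h2
  rw [hgap] at h1
  omega
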